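/- arXiv:1806.03351 — 5 statements merged into one kernel-verified Lean document; each statement's English description precedes it below -/
import Mathlib

section
/- Let Y = Y₂(n, c/√n) with constant c < 1/√γ, γ = 256/27. Then the expected number X of triangulations of the fixed cycle [123] contained in Y satisfies E[X] = O(1/√n); in particular, with probability tending to 1 as n → ∞, the cycle [123] is not triangulated in Y. -/
/-!
With at most `(γn)^k` labelled triangulations having `k` internal vertices and `2k+1` faces,
the `k`-th term of `E[X]` is at most `(c/√n) (γc²)^k`. Since `c < 1/√γ`, this is a geometric
series of ratio `γc² < 1`, so `E[X] ≤ c / ((1 - γc²) √n)`, and Markov's inequality sends the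
probability that `[123]` is triangulated to `0`.
-/

open Filter Finset Real

lemma mul_sq_lt_one_of_lt_one_div_sqrt {γ c : ℝ} (hγ : 0 < γ) (hc0 : 0 ≤ c)
    (hc : c < 1 / √γ) : γ * c ^ 2 < 1 := by
  have hcγ : c * √γ < 1 := (lt_div_iff₀ (sqrt_pos.2 hγ)).1 hc
  calc γ * c ^ 2 = (c * √γ) ^ 2 := by rw [mul_pow, sq_sqrt hγ.le, mul_comm]
    _ < 1 := pow_lt_one₀ (by positivity) hcγ two_ne_zero

lemma mul_pow_mul_div_sqrt_pow (γ c : ℝ) {n : ℕ} (hn : n ≠ 0) (k : ℕ) :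
    (γ * n) ^ k * (c / √n) ^ (2 * k + 1) = c / √n * (γ * c ^ 2) ^ k := by
  have hsq : (c / √n) ^ 2 = c ^ 2 / n := by rw [div_pow, sq_sqrt n.cast_nonneg]
  have hratio : γ * n * (c ^ 2 / n) = γ * c ^ 2 := by field_simp
  rw [pow_succ, pow_mul, hsq, ← hratio, mul_pow]
  ring

lemma sum_mul_div_sqrt_pow_le {γ c : ℝ} (hγ : 0 ≤ γ) (hc0 : 0 ≤ c) (hq : γ * c ^ 2 < 1)
    {n : ℕ} (hn : n ≠ 0) {a : ℕ → ℝ} (ha : ∀ k, a k ≤ (γ * n) ^ k) (m : ℕ) :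
    ∑ k ∈ range m, a k * (c / √n) ^ (2 * k + 1) ≤ c / (1 - γ * c ^ 2) / √n := by
  have hgeom : ∑ k ∈ range m, (γ * c ^ 2) ^ k ≤ 1 / (1 - γ * c ^ 2) := by
    rw [range_eq_Ico]
    simpa using geom_sum_Ico_le_of_lt_one (m := 0) (n := m) (by positivity : 0 ≤ γ * c ^ 2) hq
  calc ∑ k ∈ range m, a k * (c / √n) ^ (2 * k + 1)
      ≤ ∑ k ∈ range m, (γ * n) ^ k * (c / √n) ^ (2 * k + 1) :=
        Finset.sum_le_sum fun k _ => mul_le_mul_of_nonneg_right (ha k) (by positivity)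
    _ = c / √n * ∑ k ∈ range m, (γ * c ^ 2) ^ k := by
        simp_rw [mul_pow_mul_div_sqrt_pow γ c hn, Finset.mul_sum]
    _ ≤ c / √n * (1 / (1 - γ * c ^ 2)) := by gcongr
    _ = c / (1 - γ * c ^ 2) / √n := by ring

/-- Let `Y = Y₂(n, c/√n)` with constant `c < 1/√γ`, `γ = 256/27`. Given that the number
`N n k` of properly `n`-labeled triangulations of `[123]` with `k` internal vertices is at
most `(γn)^k`, and each such triangulation (having `2k+1` faces) appears with probability
`(c/√n)^(2k+1)`, the expected number `EX n` of triangulations of `[123]` contained in `Y`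
is `O(1/√n)`; in particular (by Markov's inequality) the probability that `[123]` is
triangulated in `Y` tends to `0` as `n → ∞`. -/
theorem expected_triangulations_small (c : ℝ) (hc0 : 0 < c)
    (hc : c < 1 / Real.sqrt ((256 : ℝ) / 27))
    (N : ℕ → ℕ → ℕ)
    (hN : ∀ n k : ℕ, (N n k : ℝ) ≤ ((256 : ℝ) / 27 * (n : ℝ)) ^ k)
    (EX : ℕ → ℝ)
    (hEX : ∀ n : ℕ, EX n =
      ∑ k ∈ Finset.range (n - 2), (N n k : ℝ) * (c / Real.sqrt n) ^ (2 * k + 1))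
    (Pr : ℕ → ℝ) (hPr0 : ∀ n, 0 ≤ Pr n) (hMarkov : ∀ n, Pr n ≤ EX n) :
    (∃ C : ℝ, ∀ n : ℕ, 1 ≤ n → EX n ≤ C / Real.sqrt n) ∧
      Tendsto Pr atTop (nhds 0) := by
  set γ : ℝ := 256 / 27
  have hq : γ * c ^ 2 < 1 := mul_sq_lt_one_of_lt_one_div_sqrt (by norm_num) hc0.le hc
  have hEX_le (n : ℕ) (hn : 1 ≤ n) : EX n ≤ c / (1 - γ * c ^ 2) / √n := by
    rw [hEX n]
    exact sum_mul_div_sqrt_pow_le (by norm_num) hc0.le hq (by omega) (hN n) _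
  refine ⟨⟨_, hEX_le⟩, ?_⟩
  have hbound : Tendsto (fun n : ℕ => c / (1 - γ * c ^ 2) / √n) atTop (nhds 0) :=
    tendsto_const_nhds.div_atTop (tendsto_sqrt_atTop.comp tendsto_natCast_atTop_atTop)
  refine squeeze_zero' (.of_forall hPr0) ?_ hbound
  filter_upwards [eventually_ge_atTop 1] with n hn
  exact (hMarkov n).trans (hEX_le n hn)
end

section
/- Let t_k = 6(4k+1)!/(3k+3)!, i+j=k with k/2 < j < k, and α_i := (6(2i+1)/((3i+3)(3i+2))) · C(4i+1, i) · γ^{−i} with γ = 256/27. Then t_k^j / t_k = C(k,i)·t_i·t_j·(2i+1)/t_k = (1 + o_k(1)) · α_i · (k/j)^{5/2}. -/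
noncomputable section

/-- Tutte's number of triangulations of a 3-cycle with `k` labeled internal vertices. -/
def tutte (k : ℕ) : ℕ := 6 * Nat.factorial (4 * k + 1) / Nat.factorial (3 * k + 3)

/-- `α_i = (6(2i+1)/((3i+3)(3i+2))) · C(4i+1, i) · γ^{−i}` with `γ = 256/27`. -/
def alpha (i : ℕ) : ℝ :=
  6 * (2 * (i : ℝ) + 1) / ((3 * (i : ℝ) + 3) * (3 * (i : ℝ) + 2)) *
    (Nat.choose (4 * i + 1) i : ℝ) / ((256 : ℝ) / 27) ^ i

/-!
With `scaledTutte n = t_n / (n! γ^n)`, the fraction `C(k,i) t_i t_j (2i+1) / t_k` is exactly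
`α_i · scaledTutte j / scaledTutte k`. Stirling's formula gives `C(4n,n) ~ γ^n √(2/(3πn))`, so
`scaledTutte n · n^(5/2)` converges to a positive constant. Since `j > k/2`, both `j` and `k` tend
to infinity, and the ratio of these convergent quantities at `j` and `k` tends to `1` uniformly.
-/

open Filter Topology Stirling Nat

theorem Filter.Tendsto.div_prod_self_one {α G₀ : Type*} [GroupWithZero G₀] [TopologicalSpace G₀]
    [ContinuousInv₀ G₀] [ContinuousMul G₀] {l : Filter α} {v : α → G₀} {c : G₀}
    (hv : Tendsto v l (𝓝 c)) (hc : c ≠ 0) :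
    Tendsto (fun p : α × α => v p.1 / v p.2) (l ×ˢ l) (𝓝 1) := by
  rw [← div_self hc]
  exact (hv.comp tendsto_fst).div (hv.comp tendsto_snd) hc

theorem div_eq_rpow_mul_div_mul_rpow {x y : ℝ} (hx : 0 < x) (hy : 0 < y) (a b s : ℝ) :
    a / b = (y / x) ^ s * (a * x ^ s / (b * y ^ s)) := by
  rcases eq_or_ne b 0 with rfl | hb
  · simp
  have : 0 < x ^ s := Real.rpow_pos_of_pos hx s
  have : 0 < y ^ s := Real.rpow_pos_of_pos hy s
  rw [Real.div_rpow hy.le hx.le]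
  field_simp

theorem choose_four_mul_mul_sqrt_div_pow_eq {n : ℕ} (hn : n ≠ 0) :
    ((4 * n).choose n : ℝ) * √n / (256 / 27) ^ n =
      stirlingSeq (4 * n) / (stirlingSeq n * stirlingSeq (3 * n)) * √(2 / 3) := by
  have hn' : (0 : ℝ) < n := by positivity
  have hchoose : ((4 * n).choose n : ℝ) = (4 * n)! / (n ! * (3 * n)!) := by
    rw [Nat.cast_choose ℝ (by omega), show 4 * n - n = 3 * n by omega]
  have hsqrt (c : ℝ) (hc : 0 ≤ c) : √(2 * (c * n)) = √c * (√2 * √n) := by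
    rw [← Real.sqrt_mul zero_le_two, ← Real.sqrt_mul hc]; ring_nf
  have hsqrt4 : √(4 : ℝ) = 2 := by
    rw [show (4 : ℝ) = 2 ^ 2 by norm_num, Real.sqrt_sq zero_le_two]
  simp only [stirlingSeq, hchoose]
  push_cast
  rw [mul_div_assoc 4, mul_div_assoc 3, hsqrt 4 (by norm_num), hsqrt 3 (by norm_num), hsqrt4,
    Real.sqrt_mul zero_le_two, Real.sqrt_div' _ (by norm_num : (0 : ℝ) ≤ 3),
    show (256 : ℝ) = 4 ^ 4 by norm_num, show (27 : ℝ) = 3 ^ 3 by norm_num, div_pow, ← pow_mul,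
    ← pow_mul]
  have hx : 0 < (n : ℝ) / Real.exp 1 := by positivity
  generalize (n : ℝ) / Real.exp 1 = x at hx ⊢
  have : (0 : ℝ) < √n := Real.sqrt_pos.mpr hn'
  have : (0 : ℝ) < √2 := by positivity
  have : (0 : ℝ) < √3 := by positivity
  field_simp
  rw [Real.sq_sqrt zero_le_two]
  ring

theorem tendsto_choose_four_mul_mul_sqrt_div_pow :
    Tendsto (fun n : ℕ => ((4 * n).choose n : ℝ) * √n / (256 / 27) ^ n) atTop
      (𝓝 (√(2 / (3 * Real.pi)))) := by
  have hπ : √Real.pi ≠ 0 := (Real.sqrt_pos.mpr Real.pi_pos).ne'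
  have hs := tendsto_stirlingSeq_sqrt_pi
  have hlim := ((hs.comp (tendsto_id.const_mul_atTop' (by norm_num : 0 < 4))).div
    (hs.mul (hs.comp (tendsto_id.const_mul_atTop' (by norm_num : 0 < 3))))
    (mul_ne_zero hπ hπ)).mul_const (√(2 / 3))
  rw [show √Real.pi / (√Real.pi * √Real.pi) * √(2 / 3) = √(2 / (3 * Real.pi)) by
    rw [div_mul_eq_div_div_swap, div_self hπ, Real.sqrt_div' _ (by positivity),
      Real.sqrt_div' _ (by positivity), Real.sqrt_mul (by norm_num)]; ring] at hlim
  refine hlim.congr' ?_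
  filter_upwards [eventually_ne_atTop 0] with n hn
  simp [choose_four_mul_mul_sqrt_div_pow_eq hn]

theorem tendsto_four_mul_add_one_mul_sq_div :
    Tendsto (fun n : ℕ => (4 * n + 1) * (n : ℝ) ^ 2 / ((3 * n + 1) * (3 * n + 2) * (3 * n + 3)))
      atTop (𝓝 (4 / 27)) := by
  have h := tendsto_inv_atTop_zero.comp (tendsto_natCast_atTop_atTop (R := ℝ))
  have hlim := (h.const_add 4).div (((h.const_add 3).mul ((h.const_mul 2).const_add 3)).mul
    ((h.const_mul 3).const_add 3)) (by norm_num)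
  norm_num at hlim
  refine hlim.congr' ?_
  filter_upwards [eventually_ne_atTop 0] with n hn
  simp only [Pi.div_apply]
  field_simp

theorem factorial_three_mul_add_three_dvd (k : ℕ) : (3 * k + 3)! ∣ 6 * (4 * k + 1)! := by
  match k with
  | 0 => decide
  | 1 => decide
  | m + 2 => exact Dvd.dvd.mul_left (Nat.factorial_dvd_factorial (by omega)) 6

theorem cast_tutte {K : Type*} [DivisionRing K] [CharZero K] (k : ℕ) :
    (tutte k : K) = 6 * (4 * k + 1)! / (3 * k + 3)! := by
  rw [tutte, Nat.cast_div (factorial_three_mul_add_three_dvd k)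
    (Nat.cast_ne_zero.mpr (factorial_ne_zero _))]
  push_cast
  rfl

def scaledTutte (n : ℕ) : ℝ := tutte n / (n ! * (256 / 27) ^ n)

theorem alpha_eq_mul_scaledTutte (i : ℕ) : alpha i = (2 * i + 1) * scaledTutte i := by
  rw [alpha, scaledTutte, cast_tutte, Nat.cast_choose ℝ (by omega),
    show 4 * i + 1 - i = 3 * i + 1 by omega, show 3 * i + 3 = 3 * i + 1 + 1 + 1 by ring,
    Nat.factorial_succ (3 * i + 1 + 1), Nat.factorial_succ (3 * i + 1)]
  push_cast
  field_simp
  ring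

theorem cast_choose_mul_tutte_div_tutte {i j k : ℕ} (hk : i + j = k) :
    ((k.choose i * tutte i * tutte j * (2 * i + 1) : ℕ) : ℝ) / tutte k =
      alpha i * (scaledTutte j / scaledTutte k) := by
  subst hk
  have : (tutte (i + j) : ℝ) ≠ 0 := by rw [cast_tutte]; positivity
  rw [alpha_eq_mul_scaledTutte, scaledTutte, scaledTutte, scaledTutte, pow_add]
  push_cast
  rw [Nat.cast_choose ℝ (Nat.le_add_right i j), Nat.add_sub_cancel_left]
  field_simp

theorem scaledTutte_mul_rpow_eq (n : ℕ) :
    scaledTutte n * (n : ℝ) ^ ((5 : ℝ) / 2) =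
      6 * (((4 * n).choose n : ℝ) * √n / (256 / 27) ^ n) *
        ((4 * n + 1) * (n : ℝ) ^ 2 / ((3 * n + 1) * (3 * n + 2) * (3 * n + 3))) := by
  have hchoose : ((4 * n).choose n : ℝ) = (4 * n)! / (n ! * (3 * n)!) := by
    rw [Nat.cast_choose ℝ (by omega), show 4 * n - n = 3 * n by omega]
  have hrpow : (n : ℝ) ^ ((5 : ℝ) / 2) = (n : ℝ) ^ 2 * √n := by
    rw [Real.sqrt_eq_rpow, ← Real.rpow_natCast, ← Real.rpow_add' (by positivity) (by norm_num)]
    norm_num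
  rw [scaledTutte, cast_tutte, hchoose, hrpow, Nat.factorial_succ (4 * n),
    show 3 * n + 3 = 3 * n + 2 + 1 by ring, Nat.factorial_succ (3 * n + 2),
    Nat.factorial_succ (3 * n + 1), Nat.factorial_succ (3 * n)]
  push_cast
  field_simp
  ring

theorem tendsto_scaledTutte_mul_rpow :
    Tendsto (fun n : ℕ => scaledTutte n * (n : ℝ) ^ ((5 : ℝ) / 2)) atTop
      (𝓝 (8 / 9 * √(2 / (3 * Real.pi)))) := by
  have hlim := (tendsto_choose_four_mul_mul_sqrt_div_pow.const_mul 6).mul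
    tendsto_four_mul_add_one_mul_sq_div
  rw [show 6 * √(2 / (3 * Real.pi)) * (4 / 27) = 8 / 9 * √(2 / (3 * Real.pi)) by ring] at hlim
  exact hlim.congr fun n => (scaledTutte_mul_rpow_eq n).symm

/-- With `t_k^j := C(k,i)·t_i·t_j·(2i+1)` (the number of `j`-dense triangulations,
`i + j = k`, `k/2 < j < k`), one has `t_k^j / t_k = (1 + o_k(1)) · α_i · (k/j)^(5/2)`,
uniformly in `j` in the stated range. -/
theorem dense_fraction_asymptotics :
    ∀ ε : ℝ, 0 < ε → ∃ K : ℕ, ∀ k : ℕ, K ≤ k → ∀ i j : ℕ,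
      i + j = k → k < 2 * j → j < k →
      |((Nat.choose k i * tutte i * tutte j * (2 * i + 1) : ℕ) : ℝ) / (tutte k : ℝ) -
          alpha i * ((k : ℝ) / (j : ℝ)) ^ ((5 : ℝ) / 2)| ≤
        ε * (alpha i * ((k : ℝ) / (j : ℝ)) ^ ((5 : ℝ) / 2)) := by
  intro ε hε
  have hratio := (tendsto_scaledTutte_mul_rpow.div_prod_self_one (by positivity)).eventually
    (Metric.closedBall_mem_nhds 1 hε)
  rw [prod_atTop_atTop_eq, eventually_atTop_prod_self] at hratio
  obtain ⟨N, hN⟩ := hratio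
  simp only [Real.dist_eq] at hN
  refine ⟨2 * N, fun k hk i j hij hkj hjk => ?_⟩
  have hj : (0 : ℝ) < j := by exact_mod_cast (by omega : 0 < j)
  have hk : (0 : ℝ) < k := by exact_mod_cast (by omega : 0 < k)
  have hT : 0 ≤ alpha i * ((k : ℝ) / j) ^ ((5 : ℝ) / 2) := by unfold alpha; positivity
  rw [cast_choose_mul_tutte_div_tutte hij, div_eq_rpow_mul_div_mul_rpow hj hk _ _ ((5 : ℝ) / 2),
    ← mul_assoc, ← mul_sub_one (alpha i * ((k : ℝ) / j) ^ ((5 : ℝ) / 2)), abs_mul,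
    abs_of_nonneg hT, mul_comm ε]
  exact mul_le_mul_of_nonneg_left (hN j k (by omega) (by omega)) hT
end
end

section
/- With α_i := (6(2i+1)/((3i+3)(3i+2))) · C(4i+1,i) · γ^{−i} and γ = 256/27, for all i ≥ 1, α_i ≤ (16√2)/(9√(3π)) · i^{−3/2}. -/
noncomputable section

/-!
The sequence `β_i = α_i · i^{3/2}` (`scaledAlpha`) is nondecreasing: `α_{i+1} = r(i) α_i` for an
explicit rational function `r`, and `r(x)² (x+1)³ - x³` is a polynomial with positive
coefficients. Writing each factorial through Stirling's sequence `s_n = n! / (√(2n) (n/e)^n)`,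
the powers of `e` cancel and `C(4i, i) γ^{-i} = s_{4i} / (s_i s_{3i}) · √(2/(3i))` holds exactly,
so `s_n → √π` gives `β_i → (16/9) · √(2/3) / √π`. A nondecreasing sequence stays below its limit.
-/

open Filter Topology Real Stirling
open scoped Nat

theorem alpha_pos (i : ℕ) : 0 < alpha i := by
  have : 0 < ((4 * i + 1).choose i : ℝ) := by exact_mod_cast Nat.choose_pos (by omega)
  unfold alpha
  positivity

theorem alpha_succ (i : ℕ) :
    alpha (i + 1) = alpha i * (9 * ((2 * i + 3) * (4 * i + 3) * (4 * i + 5)) /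
      (32 * ((i + 2) * (3 * i + 5) * (3 * i + 4)))) := by
  have hchoose (n : ℕ) : ((4 * n + 1).choose n : ℝ) = (4 * n + 1)! / (n ! * (3 * n + 1)!) := by
    rw [Nat.cast_choose ℝ (by omega : n ≤ 4 * n + 1), show 4 * n + 1 - n = 3 * n + 1 by omega]
  rw [alpha, alpha, hchoose, hchoose, show 4 * (i + 1) + 1 = 4 * i + 1 + 4 by ring,
    show 3 * (i + 1) + 1 = 3 * i + 1 + 3 by ring]
  simp only [Nat.factorial_succ, Nat.cast_mul]
  push_cast
  field_simp
  ring

theorem cube_le_sq_mul_add_one_cube {x : ℝ} (hx : 0 ≤ x) :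
    x ^ 3 ≤ (9 * ((2 * x + 3) * (4 * x + 3) * (4 * x + 5)) /
      (32 * ((x + 2) * (3 * x + 5) * (3 * x + 4)))) ^ 2 * (x + 1) ^ 3 := by
  rw [div_pow, div_mul_eq_mul_div, le_div_iff₀ (by positivity), ← sub_nonneg]
  have expand : (9 * ((2 * x + 3) * (4 * x + 3) * (4 * x + 5))) ^ 2 * (x + 1) ^ 3 -
      x ^ 3 * (32 * ((x + 2) * (3 * x + 5) * (3 * x + 4))) ^ 2 =
      164025 + 1410615 * x + 5350131 * x ^ 2 + 10107977 * x ^ 3 + 10391288 * x ^ 4 +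
        5955236 * x ^ 5 + 1794816 * x ^ 6 + 222336 * x ^ 7 := by
    ring
  rw [expand]
  positivity

def scaledAlpha (i : ℕ) : ℝ := alpha i * (i * √i)

theorem scaledAlpha_sq (i : ℕ) : scaledAlpha i ^ 2 = alpha i ^ 2 * i ^ 3 := by
  rw [scaledAlpha, mul_pow, mul_pow, sq_sqrt (by positivity)]
  ring

theorem scaledAlpha_nonneg (i : ℕ) : 0 ≤ scaledAlpha i := by
  have := alpha_pos i
  unfold scaledAlpha
  positivity

theorem scaledAlpha_monotone : Monotone scaledAlpha := by
  refine monotone_nat_of_le_succ fun i => ?_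
  refine (pow_le_pow_iff_left₀ (scaledAlpha_nonneg i) (scaledAlpha_nonneg (i + 1))
    two_ne_zero).mp ?_
  rw [scaledAlpha_sq, scaledAlpha_sq, alpha_succ, mul_pow, mul_assoc]
  push_cast
  gcongr
  exact cube_le_sq_mul_add_one_cube (by positivity)

theorem factorial_eq_stirlingSeq_mul {n : ℕ} (hn : n ≠ 0) :
    (n ! : ℝ) = stirlingSeq n * (√(2 * n) * (n / exp 1) ^ n) := by
  have : (n : ℝ) ≠ 0 := by exact_mod_cast hn
  rw [stirlingSeq, div_mul_cancel₀]
  positivity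

theorem cast_add_choose_eq_stirlingSeq {k l : ℕ} (hk : k ≠ 0) (hl : l ≠ 0) :
    ((k + l).choose k : ℝ) = stirlingSeq (k + l) / (stirlingSeq k * stirlingSeq l) *
      √((k + l) / (2 * k * l)) * ((k + l) ^ (k + l) / (k ^ k * l ^ l)) := by
  have hk' : (k : ℝ) ≠ 0 := by exact_mod_cast hk
  have hl' : (l : ℝ) ≠ 0 := by exact_mod_cast hl
  have hsk := (sqrt_pi_le_stirlingSeq hk).trans_lt' (by positivity) |>.ne'
  have hsl := (sqrt_pi_le_stirlingSeq hl).trans_lt' (by positivity) |>.ne'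
  have hsqrt : √((k + l) / (2 * k * l) : ℝ) = √(2 * (k + l)) / (√(2 * k) * √(2 * l)) := by
    rw [← sqrt_mul (by positivity), ← sqrt_div' _ (by positivity)]
    congr 1
    field_simp
  rw [Nat.cast_add_choose, factorial_eq_stirlingSeq_mul hk, factorial_eq_stirlingSeq_mul hl,
    factorial_eq_stirlingSeq_mul (by omega), hsqrt]
  push_cast
  rw [div_pow, div_pow, div_pow, pow_add (exp 1)]
  field_simp

theorem choose_four_mul_eq_stirlingSeq {i : ℕ} (hi : i ≠ 0) :
    ((4 * i).choose i : ℝ) =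
      stirlingSeq (4 * i) / (stirlingSeq i * stirlingSeq (3 * i)) * √(2 / (3 * i)) *
        (256 / 27) ^ i := by
  have hi' : (i : ℝ) ≠ 0 := by exact_mod_cast hi
  have hpow : ((4 * i : ℝ) ^ (4 * i) / (i ^ i * (3 * i) ^ (3 * i))) = (256 / 27) ^ i := by
    rw [mul_pow, mul_pow, pow_mul, pow_mul, pow_mul, pow_mul, div_pow]
    field_simp
    ring
  rw [show 4 * i = i + 3 * i by ring, cast_add_choose_eq_stirlingSeq hi (by omega)]
  push_cast
  rw [show (i + 3 * i : ℝ) = 4 * i by ring, show i + 3 * i = 4 * i by ring, hpow,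
    show (4 * i / (2 * i * (3 * i)) : ℝ) = 2 / (3 * i) by field_simp; ring]

theorem scaledAlpha_eq {i : ℕ} (hi : i ≠ 0) :
    scaledAlpha i = 6 * ((1 + 2 * i) / (3 + 3 * i) * ((1 + 4 * i) / (2 + 3 * i)) *
      (i / (1 + 3 * i))) * √(2 / 3) *
      (stirlingSeq (4 * i) / (stirlingSeq i * stirlingSeq (3 * i))) := by
  have hi' : (0 : ℝ) < i := by positivity
  have hchoose : ((4 * i + 1).choose i : ℝ) * (3 * i + 1) = (4 * i).choose i * (4 * i + 1) := by
    have h := Nat.choose_mul_succ_eq (4 * i) i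
    rw [show 4 * i + 1 - i = 3 * i + 1 by omega] at h
    exact_mod_cast h.symm
  have hsqrt : √(2 / (3 * i) : ℝ) = √(2 / 3) / √i := by
    rw [← sqrt_div' _ hi'.le, div_div]
  rw [scaledAlpha, alpha, eq_div_of_mul_eq (by positivity) hchoose,
    choose_four_mul_eq_stirlingSeq hi, hsqrt]
  have : √(i : ℝ) ≠ 0 := by positivity
  field_simp
  ring

theorem tendsto_scaledAlpha :
    Tendsto scaledAlpha atTop (𝓝 (16 * √2 / (9 * √(3 * π)))) := by
  have hstirling (c : ℕ) (hc : 0 < c) : Tendsto (fun i => stirlingSeq (c * i)) atTop (𝓝 √π) :=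
    tendsto_stirlingSeq_sqrt_pi.comp (tendsto_id.const_mul_atTop' hc)
  have hS := (hstirling 4 (by norm_num)).div
    (tendsto_stirlingSeq_sqrt_pi.mul (hstirling 3 (by norm_num))) (by positivity)
  have hR := ((tendsto_add_mul_div_add_mul_atTop_nhds (1 : ℝ) 3 2 three_ne_zero).mul
    (tendsto_add_mul_div_add_mul_atTop_nhds (1 : ℝ) 2 4 three_ne_zero)).mul
    (by simpa using tendsto_add_mul_div_add_mul_atTop_nhds (0 : ℝ) 1 1 three_ne_zero)
  have hlim : 6 * (2 / 3 * (4 / 3) * 3⁻¹) * √(2 / 3) * (√π / (√π * √π)) =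
      16 * √2 / (9 * √(3 * π)) := by
    rw [sqrt_div' _ (by norm_num : (0 : ℝ) ≤ 3), sqrt_mul (by norm_num : (0 : ℝ) ≤ 3)]
    have : √π ≠ 0 := by positivity
    field_simp
    ring
  rw [← hlim]
  refine (((hR.const_mul 6).mul_const _).mul hS).congr' ?_
  filter_upwards [eventually_ne_atTop 0] with i hi
  exact (scaledAlpha_eq hi).symm

/-- For all `i ≥ 1`, `α_i ≤ (16√2)/(9√(3π)) · i^(−3/2)`. -/
theorem alpha_bound (i : ℕ) (hi : 1 ≤ i) :
    alpha i ≤ 16 * Real.sqrt 2 / (9 * Real.sqrt (3 * Real.pi)) *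
      (i : ℝ) ^ (-(3 : ℝ) / 2) := by
  have hi' : (0 : ℝ) < i := by exact_mod_cast hi
  have hpow : (i : ℝ) ^ (-(3 : ℝ) / 2) = (i * √i)⁻¹ := by
    rw [neg_div, rpow_neg hi'.le, show (3 : ℝ) / 2 = 1 + 1 / 2 by norm_num, rpow_add hi',
      rpow_one, sqrt_eq_rpow]
  rw [hpow, ← div_eq_mul_inv, le_div_iff₀ (by positivity)]
  exact scaledAlpha_monotone.ge_of_tendsto tendsto_scaledAlpha i
end
end

section
/- The interiors of any two missing faces of a triangulation of [123] are either disjoint or one contains the other; hence for j > k/2 a triangulation with k internal vertices has at most one missing face of density j. -/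
open Finset

noncomputable section

/-- `F` is (the face set of) a triangulation of the triangle `[123]`, with internal
vertex set `V`, realized geometrically by the vertex placement `pos` : the corners are
fixed, triangles are nondegenerate, internal vertices lie strictly inside the big
triangle, the triangles cover the big triangle, and any two triangles meet in a common
(possibly empty) face. -/
def IsTriangulationWith (pos : ℕ → ℝ × ℝ) (V : Finset ℕ) (F : Finset (Finset ℕ)) : Prop :=
  pos 1 = ((0 : ℝ), (0 : ℝ)) ∧ pos 2 = ((1 : ℝ), (0 : ℝ)) ∧ pos 3 = ((0 : ℝ), (1 : ℝ)) ∧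
  Disjoint V ({1, 2, 3} : Finset ℕ) ∧
  Set.InjOn pos ↑(V ∪ {1, 2, 3}) ∧
  (∀ f ∈ F, f.card = 3 ∧ f ⊆ V ∪ {1, 2, 3} ∧
    AffineIndependent ℝ (fun v : f => pos ↑v)) ∧
  (∀ v ∈ V, ∃ f ∈ F, v ∈ f) ∧
  (∀ v ∈ V, pos v ∈
    interior (convexHull ℝ ({((0 : ℝ), (0 : ℝ)), (1, 0), (0, 1)} : Set (ℝ × ℝ)))) ∧
  (⋃ f ∈ F, convexHull ℝ (pos '' ↑f)) =
    convexHull ℝ ({((0 : ℝ), (0 : ℝ)), (1, 0), (0, 1)} : Set (ℝ × ℝ)) ∧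
  (∀ f ∈ F, ∀ g ∈ F,
    convexHull ℝ (pos '' ↑f) ∩ convexHull ℝ (pos '' ↑g) = convexHull ℝ (pos '' ↑(f ∩ g)))

/-- `F` is a triangulation of the triangle `[123]` with internal vertex set `V`. -/
def IsTriangulation (V : Finset ℕ) (F : Finset (Finset ℕ)) : Prop :=
  ∃ pos : ℕ → ℝ × ℝ, IsTriangulationWith pos V F

/-- A missing face of the triangulation with face set `F`: a triple of vertices, other
than `{1,2,3}`, spanning a triangle in the 1-skeleton but not a face of `F`. -/
def IsMissingFace (F : Finset (Finset ℕ)) (m : Finset ℕ) : Prop :=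
  m.card = 3 ∧ m ≠ ({1, 2, 3} : Finset ℕ) ∧ m ∉ F ∧
    ∀ e ⊆ m, e.card = 2 → ∃ f ∈ F, e ⊆ f

/-- The density of a triple `m`: the number of (internal) vertices of `V` lying strictly
inside the triangle spanned by `m` in the geometric realization `pos`. -/
def densityOf (pos : ℕ → ℝ × ℝ) (V : Finset ℕ) (m : Finset ℕ) : ℕ :=
  {v ∈ (V : Set ℕ) | pos v ∈ interior (convexHull ℝ (pos '' ↑m))}.ncard

/-!
Every edge of a missing face lies in a face of the triangulation, and faces meet in common
faces; hence an edge of one missing face that is not a side of another missing face `m` meets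
the boundary of `conv m` only at common vertices.

Suppose the interiors of two missing faces `m₁`, `m₂` overlap but neither contains the other.
Then the boundary of `conv m₂` enters the interior of `conv m₁` along some edge `ab` of `m₂`.
This edge cannot leave `conv m₁` except through one of its endpoints, so it lies in `conv m₁`,
while the third vertex `c` of `m₂` lies outside. The segments `ac` and `bc` leave `conv m₁`, which
they can only do at vertices of `m₁`: so `a, b ∈ m₁`, and `ab` is a side of `conv m₁`, which
misses its interior.

For the second claim, two missing faces of density `j > k/2` cannot have disjoint interiors, so
they are nested, `conv m ⊆ conv m'`, with the same interior vertices. A vertex `w ∈ m \ m'` would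
lie either in the interior of `conv m'` (impossible: corners of `[123]` are never interior points,
and an internal vertex there would be counted in the density of `m` although it is a vertex of
`m`) or on the boundary of `conv m'`, where the first paragraph forces `w ∈ m'`.
-/

open Set

theorem IsPreconnected.inter_frontier_nonempty {X : Type*} [TopologicalSpace X] {s t : Set X}
    (hs : IsPreconnected s) (hst : (s ∩ t).Nonempty) (hs_t : (s \ t).Nonempty) :
    (s ∩ frontier t).Nonempty := by
  by_contra hfr
  have hcover : s ⊆ interior t ∪ (closure t)ᶜ := fun x hx => by
    by_cases hx' : x ∈ interior t
    · exact Or.inl hx'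
    · exact Or.inr fun hxt => hfr ⟨x, hx, hxt, hx'⟩
  rcases hs.subset_or_subset isOpen_interior isClosed_closure.isOpen_compl
      (disjoint_compl_right_iff_subset.2 interior_subset_closure) hcover with h | h
  · obtain ⟨x, hxs, hxt⟩ := hs_t
    exact hxt (interior_subset (h hxs))
  · obtain ⟨x, hxs, hxt⟩ := hst
    exact h hxs (subset_closure hxt)

namespace AffineBasis

variable {ι 𝕜 E : Type*} [Fintype ι] [Field 𝕜] [LinearOrder 𝕜] [IsStrictOrderedRing 𝕜]
  [AddCommGroup E] [Module 𝕜 E] (b : AffineBasis ι 𝕜 E) {S : Set ι} {x : E}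

theorem mem_convexHull_image_iff :
    x ∈ convexHull 𝕜 (b '' S) ↔ (∀ i, 0 ≤ b.coord i x) ∧ ∀ i ∉ S, b.coord i x = 0 := by
  classical
  constructor
  · intro hx
    refine convexHull_min (t := {y | (∀ i, 0 ≤ b.coord i y) ∧ ∀ i ∉ S, b.coord i y = 0})
      ?_ ?_ hx
    · rintro _ ⟨j, hj, rfl⟩
      refine ⟨fun i => ?_, fun i hi => ?_⟩
      · rw [b.coord_apply]; split_ifs <;> norm_num
      · rw [b.coord_apply_ne (ne_of_mem_of_not_mem hj hi).symm]
    · have hconv : ∀ i, Convex 𝕜 {y : E | 0 ≤ b.coord i y} := fun i =>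
        (convex_Ici (0 : 𝕜)).affine_preimage (b.coord i)
      have hconv' : ∀ i, Convex 𝕜 {y : E | b.coord i y = 0} := fun i =>
        (convex_singleton (0 : 𝕜)).affine_preimage (b.coord i)
      simpa only [ofPred_and, ofPred_forall] using
        (convex_iInter hconv).inter (convex_iInter fun i => convex_iInter fun _ => hconv' i)
  · rintro ⟨hnonneg, hzero⟩
    have hsum : ∑ i, b.coord i x = 1 := b.sum_coord_apply_eq_one x
    have hx : (univ.filter (· ∈ S)).centerMass (fun i => b.coord i x) b = x := by
      rw [Finset.centerMass_subset _ (Finset.filter_subset _ _)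
          (fun i _ hi => hzero i (by simpa using hi)),
        ← affineCombination_eq_centerMass hsum, b.affineCombination_coord_eq_self]
    rw [← hx]
    refine Finset.centerMass_mem_convexHull _ (fun i _ => hnonneg i) ?_
      (fun i hi => mem_image_of_mem b (Finset.mem_filter.1 hi).2)
    rw [Finset.sum_filter_of_ne (fun i _ hi => by_contra fun hiS => hi (hzero i hiS)), hsum]
    exact one_pos

theorem convexHull_image_inter_subset (S T : Set ι) :
    convexHull 𝕜 (b '' S) ∩ convexHull 𝕜 (b '' T) ⊆ convexHull 𝕜 (b '' (S ∩ T)) := by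
  rintro x ⟨hS, hT⟩
  rw [mem_convexHull_image_iff] at *
  exact ⟨hS.1, fun i hi => (not_and_or.1 hi).elim (hS.2 i) (hT.2 i)⟩

section Normed

variable {ι E : Type*} [Fintype ι] [NormedAddCommGroup E] [NormedSpace ℝ E]
  (b : AffineBasis ι ℝ E)

theorem disjoint_convexHull_image_interior {S : Set ι} {i : ι} (hi : i ∉ S) :
    Disjoint (convexHull ℝ (b '' S)) (interior (convexHull ℝ (range b))) := by
  rw [b.interior_convexHull, Set.disjoint_left]
  intro x hx hpos
  exact (hpos i).ne' (((b.mem_convexHull_image_iff).1 hx).2 i hi)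

theorem frontier_convexHull_subset :
    frontier (convexHull ℝ (range b)) ⊆ ⋃ i, convexHull ℝ (b '' {i}ᶜ) := by
  intro x ⟨hcl, hint⟩
  rw [((finite_range b).isCompact_convexHull (𝕜 := ℝ)).isClosed.closure_eq, ← image_univ,
    mem_convexHull_image_iff] at hcl
  rw [b.interior_convexHull] at hint
  obtain ⟨i, hi⟩ := not_forall.1 hint
  refine mem_iUnion.2 ⟨i, (b.mem_convexHull_image_iff).2 ⟨hcl.1, fun j hj => ?_⟩⟩
  rw [not_not.1 hj]
  exact le_antisymm (not_lt.1 hi) (hcl.1 i)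

end Normed

end AffineBasis

section Simplex

open Module

variable {ι E : Type*} [NormedAddCommGroup E] [NormedSpace ℝ E] {p : ι → E} {s : Finset ι}

theorem affineIndependent_of_interior_convexHull_nonempty (hs : s.card = finrank ℝ E + 1)
    (hne : (interior (convexHull ℝ (p '' ↑s))).Nonempty) :
    AffineIndependent ℝ (fun i : s => p i) := by
  have hrange : range (fun i : s => p i) = p '' ↑s := by
    ext; simp
  rw [affineIndependent_iff_finrank_vectorSpan_eq ℝ _ (by simpa using hs), hrange,
    ← direction_affineSpan, affineSpan_eq_top_of_nonempty_interior hne,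
    AffineSubspace.direction_top, finrank_top]

variable [FiniteDimensional ℝ E]

def simplexBasis (hind : AffineIndependent ℝ (fun i : s => p i))
    (hs : s.card = finrank ℝ E + 1) : AffineBasis s ℝ E :=
  ⟨fun i => p i, hind, hind.affineSpan_eq_top_iff_card_eq_finrank_add_one.2 (by simpa using hs)⟩

variable (hind : AffineIndependent ℝ (fun i : s => p i)) (hs : s.card = finrank ℝ E + 1)
include hind hs

theorem simplexBasis_image {t : Finset ι} (ht : t ⊆ s) :
    simplexBasis hind hs '' {i | ↑i ∈ t} = p '' ↑t := by
  ext y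
  constructor
  · rintro ⟨i, hi, rfl⟩
    exact ⟨i, hi, rfl⟩
  · rintro ⟨i, hi, rfl⟩
    exact ⟨⟨i, ht hi⟩, hi, rfl⟩

theorem convexHull_inter_convexHull_subset [DecidableEq ι] {t₁ t₂ : Finset ι} (ht₁ : t₁ ⊆ s)
    (ht₂ : t₂ ⊆ s) :
    convexHull ℝ (p '' ↑t₁) ∩ convexHull ℝ (p '' ↑t₂) ⊆ convexHull ℝ (p '' ↑(t₁ ∩ t₂)) := by
  have h := (simplexBasis hind hs).convexHull_image_inter_subset {i | ↑i ∈ t₁} {i | ↑i ∈ t₂}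
  have hinter : {i : s | ↑i ∈ t₁} ∩ {i | ↑i ∈ t₂} = {i : s | (i : ι) ∈ t₁ ∩ t₂} := by
    ext; simp
  rwa [hinter, simplexBasis_image hind hs ht₁, simplexBasis_image hind hs ht₂,
    simplexBasis_image hind hs (Finset.inter_subset_left.trans ht₁)] at h

theorem simplexBasis_range : Set.range (simplexBasis hind hs) = p '' ↑s := by
  rw [← simplexBasis_image hind hs subset_rfl, ← image_univ]
  simp

theorem disjoint_convexHull_interior_convexHull {t : Finset ι} (ht : t ⊆ s) {i : ι}
    (his : i ∈ s) (hit : i ∉ t) :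
    Disjoint (convexHull ℝ (p '' ↑t)) (interior (convexHull ℝ (p '' ↑s))) := by
  have h := (simplexBasis hind hs).disjoint_convexHull_image_interior
    (S := {j : s | (j : ι) ∈ t}) (i := ⟨i, his⟩) hit
  rwa [simplexBasis_image hind hs ht, simplexBasis_range] at h

theorem frontier_convexHull_subset_biUnion_erase [DecidableEq ι] :
    frontier (convexHull ℝ (p '' ↑s)) ⊆ ⋃ i ∈ s, convexHull ℝ (p '' ↑(s.erase i)) := by
  intro x hx
  rw [← simplexBasis_range hind hs] at hx
  obtain ⟨i, hi⟩ := mem_iUnion.1 ((simplexBasis hind hs).frontier_convexHull_subset hx)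
  have hcompl : ({i}ᶜ : Set s) = {j : s | (j : ι) ∈ s.erase i} := by
    ext j
    simp only [mem_compl_iff, mem_singleton_iff, mem_ofPred_eq, Finset.mem_erase, j.2, and_true,
      Subtype.ext_iff]
  rw [hcompl, simplexBasis_image hind hs (s.erase_subset _)] at hi
  exact mem_biUnion i.2 hi

end Simplex

theorem finrank_real_prod_real_add_one : Module.finrank ℝ (ℝ × ℝ) + 1 = 3 := by
  simp

theorem interior_convexHull_stdTriangle_subset :
    interior (convexHull ℝ ({((0 : ℝ), (0 : ℝ)), (1, 0), (0, 1)} : Set (ℝ × ℝ))) ⊆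
      Set.Ioi 0 ×ˢ Set.Ioi 0 := by
  have hsub : convexHull ℝ ({((0 : ℝ), (0 : ℝ)), (1, 0), (0, 1)} : Set (ℝ × ℝ)) ⊆
      Set.Ici 0 ×ˢ Set.Ici 0 :=
    convexHull_min (by simp [Set.insert_subset_iff]) ((convex_Ici 0).prod (convex_Ici 0))
  simpa only [interior_prod_eq, interior_Ici] using interior_mono hsub

namespace IsMissingFace

variable {F : Finset (Finset ℕ)} {m : Finset ℕ} (hm : IsMissingFace F m)
include hm

theorem exists_face_superset_pair {a b : ℕ} (ha : a ∈ m) (hb : b ∈ m) (hab : a ≠ b) :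
    ∃ g ∈ F, {a, b} ⊆ g :=
  hm.2.2.2 _ (Finset.insert_subset ha (Finset.singleton_subset_iff.2 hb)) (Finset.card_pair hab)

theorem exists_face_superset_erase {i : ℕ} (hi : i ∈ m) : ∃ g ∈ F, m.erase i ⊆ g :=
  hm.2.2.2 _ (m.erase_subset i) (by rw [Finset.card_erase_of_mem hi, hm.1])

theorem exists_face_mem {a : ℕ} (ha : a ∈ m) : ∃ g ∈ F, a ∈ g := by
  obtain ⟨b, hb, hba⟩ := Finset.exists_mem_ne (by rw [hm.1]; norm_num) a
  obtain ⟨g, hg, hpair⟩ := hm.exists_face_superset_pair ha hb hba.symm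
  exact ⟨g, hg, hpair (by simp)⟩

end IsMissingFace

namespace IsTriangulationWith

variable {pos : ℕ → ℝ × ℝ} {V : Finset ℕ} {F : Finset (Finset ℕ)}
  (h : IsTriangulationWith pos V F)
include h

theorem card_face {f : Finset ℕ} (hf : f ∈ F) : f.card = Module.finrank ℝ (ℝ × ℝ) + 1 :=
  (h.2.2.2.2.2.1 f hf).1.trans finrank_real_prod_real_add_one.symm

theorem face_subset {f : Finset ℕ} (hf : f ∈ F) : f ⊆ V ∪ {1, 2, 3} :=
  (h.2.2.2.2.2.1 f hf).2.1

theorem affineIndependent_face {f : Finset ℕ} (hf : f ∈ F) :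
    AffineIndependent ℝ (fun v : f => pos v) :=
  (h.2.2.2.2.2.1 f hf).2.2

theorem convexHull_face_subset {f : Finset ℕ} (hf : f ∈ F) :
    convexHull ℝ (pos '' ↑f) ⊆
      convexHull ℝ ({((0 : ℝ), (0 : ℝ)), (1, 0), (0, 1)} : Set (ℝ × ℝ)) := by
  rw [← h.2.2.2.2.2.2.2.2.1]
  exact subset_biUnion_of_mem (u := fun f : Finset ℕ => convexHull ℝ (pos '' ↑f)) hf

theorem convexHull_subset_of_isMissingFace {m : Finset ℕ} (hm : IsMissingFace F m) :
    convexHull ℝ (pos '' ↑m) ⊆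
      convexHull ℝ ({((0 : ℝ), (0 : ℝ)), (1, 0), (0, 1)} : Set (ℝ × ℝ)) := by
  refine convexHull_min ?_ (convex_convexHull ℝ _)
  rintro _ ⟨v, hv, rfl⟩
  obtain ⟨g, hg, hvg⟩ := hm.exists_face_mem hv
  exact h.convexHull_face_subset hg (subset_convexHull ℝ _ (Set.mem_image_of_mem pos hvg))

theorem convexHull_inter_convexHull_face {f g : Finset ℕ} (hf : f ∈ F) (hg : g ∈ F) :
    convexHull ℝ (pos '' ↑f) ∩ convexHull ℝ (pos '' ↑g) = convexHull ℝ (pos '' ↑(f ∩ g)) :=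
  h.2.2.2.2.2.2.2.2.2 f hf g hg

theorem pos_corner_notMem_interior {w : ℕ} (hw : w ∈ ({1, 2, 3} : Finset ℕ)) :
    pos w ∉ interior
      (convexHull ℝ ({((0 : ℝ), (0 : ℝ)), (1, 0), (0, 1)} : Set (ℝ × ℝ))) := by
  intro hint
  have hpos := interior_convexHull_stdTriangle_subset hint
  obtain ⟨h1, h2, h3, -⟩ := h
  simp only [Finset.mem_insert, Finset.mem_singleton] at hw
  rcases hw with rfl | rfl | rfl <;> simp_all

theorem convexHull_inter_subset {e e' g g' : Finset ℕ} (hg : g ∈ F) (hg' : g' ∈ F)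
    (he : e ⊆ g) (he' : e' ⊆ g') :
    convexHull ℝ (pos '' ↑e) ∩ convexHull ℝ (pos '' ↑e') ⊆ convexHull ℝ (pos '' ↑(e ∩ e')) := by
  intro x ⟨hxe, hxe'⟩
  have hxgg' : x ∈ convexHull ℝ (pos '' ↑(g ∩ g')) := by
    rw [← h.convexHull_inter_convexHull_face hg hg']
    exact ⟨convexHull_mono (image_mono (Finset.coe_subset.2 he)) hxe,
      convexHull_mono (image_mono (Finset.coe_subset.2 he')) hxe'⟩
  have hx₁ := convexHull_inter_convexHull_subset (h.affineIndependent_face hg) (h.card_face hg)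
    he Finset.inter_subset_left ⟨hxe, hxgg'⟩
  have hx₂ := convexHull_inter_convexHull_subset (h.affineIndependent_face hg') (h.card_face hg')
    (Finset.inter_subset_right.trans Finset.inter_subset_right) he' ⟨hx₁, hxe'⟩
  refine convexHull_mono (image_mono (Finset.coe_subset.2 ?_)) hx₂
  exact Finset.inter_subset_inter_right Finset.inter_subset_left

section MissingFace

variable {m : Finset ℕ} (hm : IsMissingFace F m) (hind : AffineIndependent ℝ (fun v : m => pos v))
include hm hind

theorem convexHull_inter_frontier_subset {e g : Finset ℕ} (hg : g ∈ F) (heg : e ⊆ g)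
    (he : e.card ≤ 2) (hem : ¬ e ⊆ m) :
    convexHull ℝ (pos '' ↑e) ∩ frontier (convexHull ℝ (pos '' ↑m)) ⊆ pos '' ↑(e ∩ m) := by
  rintro s ⟨hse, hsf⟩
  obtain ⟨i, hi, hsi⟩ := mem_iUnion₂.1 (frontier_convexHull_subset_biUnion_erase hind
    (hm.1.trans finrank_real_prod_real_add_one.symm) hsf)
  obtain ⟨g', hg', hig'⟩ := hm.exists_face_superset_erase hi
  have hs := h.convexHull_inter_subset hg hg' heg hig' ⟨hse, hsi⟩
  have hcard : (e ∩ m.erase i).card ≤ 1 := by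
    have hssub : e ∩ m.erase i ⊂ e := Finset.ssubset_iff_subset_ne.2 ⟨Finset.inter_subset_left,
      fun heq => hem (heq ▸ Finset.inter_subset_right.trans (m.erase_subset i))⟩
    have := Finset.card_lt_card hssub
    omega
  have hsing : (pos '' ↑(e ∩ m.erase i)).Subsingleton :=
    ((Set.subsingleton_coe _).1 (Finset.card_le_one_iff_subsingleton_coe.1 hcard)).image pos
  rw [(hsing.convex (𝕜 := ℝ)).convexHull_eq] at hs
  exact image_mono (Finset.coe_subset.2 (Finset.inter_subset_inter_left (m.erase_subset i))) hs

theorem segment_subset_convexHull {a b : ℕ} (habF : ∃ g ∈ F, {a, b} ⊆ g)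
    (hab : pos a ≠ pos b)
    (hmeet : (segment ℝ (pos a) (pos b) ∩ interior (convexHull ℝ (pos '' ↑m))).Nonempty) :
    segment ℝ (pos a) (pos b) ⊆ convexHull ℝ (pos '' ↑m) := by
  have hpair : convexHull ℝ (pos '' ↑({a, b} : Finset ℕ)) = segment ℝ (pos a) (pos b) := by
    rw [Finset.coe_pair, image_pair, convexHull_pair]
  by_cases habm : {a, b} ⊆ m
  · rw [← hpair]
    exact convexHull_mono (image_mono (Finset.coe_subset.2 habm))
  rw [← closure_openSegment]
  refine closure_minimal ?_ (((m.finite_toSet.image pos).isCompact_convexHull (𝕜 := ℝ)).isClosed)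
  by_contra hout
  obtain ⟨g, hg, habg⟩ := habF
  obtain ⟨p, hpseg, hpint⟩ := hmeet
  rw [← closure_openSegment] at hpseg
  obtain ⟨q, hqint, hqseg⟩ := mem_closure_iff.1 hpseg _ isOpen_interior hpint
  obtain ⟨s, hs, hsf⟩ := (convex_openSegment (pos a) (pos b)).isPreconnected.inter_frontier_nonempty
    ⟨q, hqseg, interior_subset hqint⟩ (not_subset.1 hout)
  obtain ⟨v, hv, rfl⟩ := h.convexHull_inter_frontier_subset hm hind hg habg Finset.card_le_two habm
    ⟨hpair ▸ openSegment_subset_segment ℝ _ _ hs, hsf⟩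
  rcases Finset.mem_insert.1 (Finset.mem_inter.1 hv).1 with rfl | hvb
  · exact hab ((left_mem_openSegment_iff).1 hs)
  · rw [Finset.mem_singleton.1 hvb] at hs
    exact hab ((right_mem_openSegment_iff).1 hs)

theorem mem_of_pos_mem_convexHull {w c : ℕ} (hwcF : ∃ g ∈ F, {w, c} ⊆ g)
    (hw : pos w ∈ convexHull ℝ (pos '' ↑m)) (hc : pos c ∉ convexHull ℝ (pos '' ↑m)) : w ∈ m := by
  obtain ⟨s, hs, hsf⟩ := (convex_segment (pos w) (pos c)).isPreconnected.inter_frontier_nonempty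
    ⟨pos w, left_mem_segment ℝ _ _, hw⟩ ⟨pos c, right_mem_segment ℝ _ _, hc⟩
  have hwcm : ¬ {w, c} ⊆ m := fun hsub =>
    hc (subset_convexHull ℝ _ (Set.mem_image_of_mem pos (hsub (by simp))))
  obtain ⟨g, hg, hwcg⟩ := hwcF
  obtain ⟨v, hv, rfl⟩ := h.convexHull_inter_frontier_subset hm hind hg hwcg Finset.card_le_two hwcm
    ⟨by rwa [Finset.coe_pair, image_pair, convexHull_pair], hsf⟩
  obtain ⟨hvwc, hvm⟩ := Finset.mem_inter.1 hv
  rcases Finset.mem_insert.1 hvwc with rfl | hvc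
  · exact hvm
  · rw [Finset.mem_singleton.1 hvc] at hvm
    exact absurd (subset_convexHull ℝ _ (Set.mem_image_of_mem pos hvm)) hc

theorem mem_of_pos_mem_frontier {m' : Finset ℕ} (hm' : IsMissingFace F m')
    (hind' : AffineIndependent ℝ (fun v : m' => pos v)) {w : ℕ} (hw : w ∈ m')
    (hwf : pos w ∈ frontier (convexHull ℝ (pos '' ↑m))) : w ∈ m := by
  obtain ⟨u, hu, huw⟩ := Finset.exists_mem_ne (by rw [hm'.1]; norm_num) w
  by_cases hwu : {w, u} ⊆ m
  · exact hwu (Finset.mem_insert_self w {u})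
  obtain ⟨g, hg, hwug⟩ := hm'.exists_face_superset_pair hw hu huw.symm
  obtain ⟨v, hv, hvw⟩ := h.convexHull_inter_frontier_subset hm hind hg hwug Finset.card_le_two
    hwu ⟨subset_convexHull ℝ _ (Set.mem_image_of_mem pos (Finset.mem_insert_self w {u})), hwf⟩
  obtain ⟨hvwu, hvm⟩ := Finset.mem_inter.1 hv
  rcases Finset.mem_insert.1 hvwu with rfl | hvu
  · exact hvm
  · rw [Finset.mem_singleton.1 hvu] at hvw
    exact absurd (congrArg Subtype.val (hind'.injective (a₁ := ⟨u, hu⟩) (a₂ := ⟨w, hw⟩) hvw)) huw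

theorem convexHull_subset_of_edge_meets_interior {m' : Finset ℕ} (hm' : IsMissingFace F m')
    (hind' : AffineIndependent ℝ (fun v : m' => pos v)) {c : ℕ} (hc : c ∈ m')
    (hmeet : (convexHull ℝ (pos '' ↑(m'.erase c)) ∩
      interior (convexHull ℝ (pos '' ↑m))).Nonempty) :
    convexHull ℝ (pos '' ↑m') ⊆ convexHull ℝ (pos '' ↑m) := by
  obtain ⟨a, b, hab, habe⟩ := Finset.card_eq_two.1
    (by rw [Finset.card_erase_of_mem hc, hm'.1] : (m'.erase c).card = 2)
  obtain ⟨hac, ha⟩ := Finset.mem_erase.1 (habe ▸ Finset.mem_insert_self a {b})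
  obtain ⟨hbc, hb⟩ := Finset.mem_erase.1
    (habe ▸ Finset.mem_insert_of_mem (Finset.mem_singleton_self b))
  have hposab : pos a ≠ pos b := fun heq =>
    hab (congrArg Subtype.val (hind'.injective (a₁ := ⟨a, ha⟩) (a₂ := ⟨b, hb⟩) heq))
  rw [habe, Finset.coe_pair, image_pair, convexHull_pair] at hmeet
  have hseg := h.segment_subset_convexHull hm hind (hm'.exists_face_superset_pair ha hb hab)
    hposab hmeet
  by_contra hsub
  have hc' : pos c ∉ convexHull ℝ (pos '' ↑m) := by
    refine fun hcm => hsub (convexHull_min ?_ (convex_convexHull ℝ _))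
    rintro _ ⟨v, hv, rfl⟩
    by_cases hvc : v = c
    · exact hvc ▸ hcm
    · rcases Finset.mem_insert.1 (habe ▸ Finset.mem_erase.2 ⟨hvc, hv⟩) with rfl | hvb
      · exact hseg (left_mem_segment ℝ _ _)
      · exact Finset.mem_singleton.1 hvb ▸ hseg (right_mem_segment ℝ _ _)
  have ham : a ∈ m := h.mem_of_pos_mem_convexHull hm hind
    (hm'.exists_face_superset_pair ha hc hac) (hseg (left_mem_segment ℝ _ _)) hc'
  have hbm : b ∈ m := h.mem_of_pos_mem_convexHull hm hind
    (hm'.exists_face_superset_pair hb hc hbc) (hseg (right_mem_segment ℝ _ _)) hc'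
  obtain ⟨k, hk, hkab⟩ := Finset.exists_mem_notMem_of_card_lt_card
    (by rw [Finset.card_pair hab, hm.1]; norm_num : ({a, b} : Finset ℕ).card < m.card)
  have hdisj := disjoint_convexHull_interior_convexHull hind
    (hm.1.trans finrank_real_prod_real_add_one.symm)
    (Finset.insert_subset ham (Finset.singleton_subset_iff.2 hbm)) hk hkab
  rw [Finset.coe_pair, image_pair, convexHull_pair] at hdisj
  obtain ⟨p, hpseg, hpint⟩ := hmeet
  exact Set.disjoint_left.1 hdisj hpseg hpint

end MissingFace

theorem interior_subset_of_interior_inter_nonempty {m₁ m₂ : Finset ℕ}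
    (hm₁ : IsMissingFace F m₁) (hm₂ : IsMissingFace F m₂)
    (hmeet : (interior (convexHull ℝ (pos '' ↑m₁)) ∩
      interior (convexHull ℝ (pos '' ↑m₂))).Nonempty)
    (hn : ¬ interior (convexHull ℝ (pos '' ↑m₂)) ⊆ interior (convexHull ℝ (pos '' ↑m₁))) :
    interior (convexHull ℝ (pos '' ↑m₁)) ⊆ interior (convexHull ℝ (pos '' ↑m₂)) := by
  have hcard₂ := hm₂.1.trans finrank_real_prod_real_add_one.symm
  have hind₁ := affineIndependent_of_interior_convexHull_nonempty
    (hm₁.1.trans finrank_real_prod_real_add_one.symm) (hmeet.mono inter_subset_left)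
  have hind₂ := affineIndependent_of_interior_convexHull_nonempty hcard₂
    (hmeet.mono inter_subset_right)
  by_contra hn'
  obtain ⟨p, hp₁, hp₂⟩ := (convex_convexHull ℝ _).interior.isPreconnected.inter_frontier_nonempty
    hmeet (not_subset.1 hn')
  obtain ⟨c, hc, hpc⟩ := mem_iUnion₂.1
    (frontier_convexHull_subset_biUnion_erase hind₂ hcard₂ (frontier_interior_subset hp₂))
  exact hn (interior_mono
    (h.convexHull_subset_of_edge_meets_interior hm₁ hind₁ hm₂ hind₂ hc ⟨p, hpc, hp₁⟩))

theorem interior_disjoint_or_subset_or_superset {m₁ m₂ : Finset ℕ}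
    (hm₁ : IsMissingFace F m₁) (hm₂ : IsMissingFace F m₂) :
    Disjoint (interior (convexHull ℝ (pos '' ↑m₁))) (interior (convexHull ℝ (pos '' ↑m₂))) ∨
      interior (convexHull ℝ (pos '' ↑m₁)) ⊆ interior (convexHull ℝ (pos '' ↑m₂)) ∨
      interior (convexHull ℝ (pos '' ↑m₂)) ⊆ interior (convexHull ℝ (pos '' ↑m₁)) := by
  by_cases hmeet : (interior (convexHull ℝ (pos '' ↑m₁)) ∩
      interior (convexHull ℝ (pos '' ↑m₂))).Nonempty
  · by_cases hn : interior (convexHull ℝ (pos '' ↑m₂)) ⊆ interior (convexHull ℝ (pos '' ↑m₁))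
    · exact Or.inr (Or.inr hn)
    · exact Or.inr (Or.inl (h.interior_subset_of_interior_inter_nonempty hm₁ hm₂ hmeet hn))
  · exact Or.inl (Set.disjoint_iff_inter_eq_empty.2 (Set.not_nonempty_iff_eq_empty.1 hmeet))

theorem eq_of_interior_subset {m m' : Finset ℕ} (hm : IsMissingFace F m)
    (hm' : IsMissingFace F m') (hne : (interior (convexHull ℝ (pos '' ↑m))).Nonempty)
    (hsub : interior (convexHull ℝ (pos '' ↑m)) ⊆ interior (convexHull ℝ (pos '' ↑m')))
    (hV : ∀ v ∈ V, pos v ∈ interior (convexHull ℝ (pos '' ↑m')) →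
      pos v ∈ interior (convexHull ℝ (pos '' ↑m))) :
    m = m' := by
  have hcard := hm.1.trans finrank_real_prod_real_add_one.symm
  have hcard' := hm'.1.trans finrank_real_prod_real_add_one.symm
  have hind := affineIndependent_of_interior_convexHull_nonempty hcard hne
  have hind' := affineIndependent_of_interior_convexHull_nonempty hcard' (hne.mono hsub)
  by_contra hne'
  obtain ⟨w, hw, hwm'⟩ := Finset.not_subset.1 fun hmm' =>
    hne' (Finset.eq_of_subset_of_card_le hmm' (by rw [hm.1, hm'.1]))
  obtain ⟨u, hu, huw⟩ := Finset.exists_mem_ne (by rw [hm.1]; norm_num) w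
  have hwint_m : pos w ∉ interior (convexHull ℝ (pos '' ↑m)) :=
    Set.disjoint_left.1 (disjoint_convexHull_interior_convexHull hind hcard
      (Finset.singleton_subset_iff.2 hw) hu (by simpa using huw))
      (by simp : pos w ∈ convexHull ℝ (pos '' ↑({w} : Finset ℕ)))
  have hwT' : pos w ∈ convexHull ℝ (pos '' ↑m') := by
    have hwc : pos w ∈ closure (interior (convexHull ℝ (pos '' ↑m))) := by
      rw [(convex_convexHull ℝ _).closure_interior_eq_closure_of_nonempty_interior hne]
      exact subset_closure (subset_convexHull ℝ _ (Set.mem_image_of_mem pos hw))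
    exact closure_minimal (interior_subset.trans' hsub)
      ((m'.finite_toSet.image pos).isCompact_convexHull (𝕜 := ℝ)).isClosed hwc
  by_cases hwint : pos w ∈ interior (convexHull ℝ (pos '' ↑m'))
  · obtain ⟨g, hg, hwg⟩ := hm.exists_face_mem hw
    rcases Finset.mem_union.1 (h.face_subset hg hwg) with hwV | hwcorner
    · exact hwint_m (hV w hwV hwint)
    · exact h.pos_corner_notMem_interior hwcorner
        (interior_mono (h.convexHull_subset_of_isMissingFace hm') hwint)
  exact hwm' (h.mem_of_pos_mem_frontier hm' hind' hm hind hw ⟨subset_closure hwT', hwint⟩)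

theorem eq_of_interior_subset_of_densityOf_le {m m' : Finset ℕ} (hm : IsMissingFace F m)
    (hm' : IsMissingFace F m')
    (hsub : interior (convexHull ℝ (pos '' ↑m)) ⊆ interior (convexHull ℝ (pos '' ↑m')))
    (hd : densityOf pos V m' ≤ densityOf pos V m) (hpos : 0 < densityOf pos V m) : m = m' := by
  obtain ⟨v, -, hv⟩ := Set.nonempty_of_ncard_ne_zero hpos.ne'
  refine h.eq_of_interior_subset hm hm' ⟨pos v, hv⟩ hsub fun u hu hu' => ?_
  have hsubV : {v ∈ (V : Set ℕ) | pos v ∈ interior (convexHull ℝ (pos '' ↑m))} ⊆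
      {v ∈ (V : Set ℕ) | pos v ∈ interior (convexHull ℝ (pos '' ↑m'))} :=
    fun x hx => ⟨hx.1, hsub hx.2⟩
  have heq := Set.eq_of_subset_of_ncard_le hsubV hd (V.finite_toSet.subset (sep_subset _ _))
  exact (heq.ge ⟨hu, hu'⟩).2

end IsTriangulationWith

theorem densityOf_add_densityOf_le {pos : ℕ → ℝ × ℝ} {V m m' : Finset ℕ}
    (hdisj : Disjoint (interior (convexHull ℝ (pos '' ↑m)))
      (interior (convexHull ℝ (pos '' ↑m')))) :
    densityOf pos V m + densityOf pos V m' ≤ V.card := by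
  have hdisjV : Disjoint {v ∈ (V : Set ℕ) | pos v ∈ interior (convexHull ℝ (pos '' ↑m))}
      {v ∈ (V : Set ℕ) | pos v ∈ interior (convexHull ℝ (pos '' ↑m'))} :=
    Set.disjoint_left.2 fun v hv hv' => Set.disjoint_left.1 hdisj hv.2 hv'.2
  rw [densityOf, densityOf, ← Set.ncard_union_eq hdisjV (V.finite_toSet.subset (sep_subset _ _))
    (V.finite_toSet.subset (sep_subset _ _)), ← Set.ncard_coe_finset]
  exact Set.ncard_le_ncard (union_subset (sep_subset _ _) (sep_subset _ _)) V.finite_toSet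

/-- The interiors of any two missing faces of a triangulation of `[123]` are either
disjoint or one contains the other; hence if `j > k/2` (where `k` is the number of
internal vertices) there is at most one missing face of density `j`. -/
theorem missing_faces_nested_or_disjoint (pos : ℕ → ℝ × ℝ) (V : Finset ℕ)
    (F : Finset (Finset ℕ)) (h : IsTriangulationWith pos V F)
    (m₁ m₂ : Finset ℕ) (h₁ : IsMissingFace F m₁) (h₂ : IsMissingFace F m₂) :
    (Disjoint (interior (convexHull ℝ (pos '' ↑m₁))) (interior (convexHull ℝ (pos '' ↑m₂))) ∨
      interior (convexHull ℝ (pos '' ↑m₁)) ⊆ interior (convexHull ℝ (pos '' ↑m₂)) ∨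
      interior (convexHull ℝ (pos '' ↑m₂)) ⊆ interior (convexHull ℝ (pos '' ↑m₁))) ∧
    (∀ j : ℕ, V.card < 2 * j →
      densityOf pos V m₁ = j → densityOf pos V m₂ = j → m₁ = m₂) := by
  refine ⟨h.interior_disjoint_or_subset_or_superset h₁ h₂, fun j hj hd₁ hd₂ => ?_⟩
  rcases h.interior_disjoint_or_subset_or_superset h₁ h₂ with hdisj | hsub | hsub
  · have := densityOf_add_densityOf_le (V := V) hdisj
    omega
  · exact h.eq_of_interior_subset_of_densityOf_le h₁ h₂ hsub (by omega) (by omega)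
  · exact (h.eq_of_interior_subset_of_densityOf_le h₂ h₁ hsub (by omega) (by omega)).symm
end
end

section
/- Let c > 1/√γ, γ = 256/27, k = ⌈log² n⌉, and let μ be the expected number of (k/2)-simple, properly n-labeled triangulations of [123] with k internal vertices present in Y₂(n, c/√n). Then μ ≥ n^{Ω(log n)}; in particular μ → ∞ superpolynomially. -/
open Filter Asymptotics

/-!
Put `k = ⌈log² n⌉` and `b = c √γ > 1`. Bounding `k! · C(n-3, k) ≥ (n - k - 2)^k ≥ (n / b)^k`
(possible since `k = o(n)`) and using `N_simple(k) ≥ k! γ^k / k^C`, the factors `k!` and `n^k`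
cancel and `μ ≥ b^k · (c / √n) / k^C`. Taking logarithms, `log μ ≥ log² n · log b - O(log n)`,
which beats `ε log² n` for `ε = (log b) / 2`.
-/

lemma sub_le_natCast_tsub (m n : ℕ) : (m : ℝ) - n ≤ ((m - n : ℕ) : ℝ) := by
  rcases le_total n m with h | h
  · rw [Nat.cast_sub h]
  · rw [Nat.sub_eq_zero_of_le h, Nat.cast_zero, sub_nonpos]
    exact_mod_cast h

lemma pow_le_factorial_mul_choose {x : ℝ} {m k : ℕ} (hx₀ : 0 ≤ x) (hx : x ≤ m + 1 - k) :
    x ^ k ≤ k.factorial * m.choose k := by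
  have hcast : (m : ℝ) + 1 - k ≤ ((m + 1 - k : ℕ) : ℝ) := by
    exact_mod_cast sub_le_natCast_tsub (m + 1) k
  calc x ^ k ≤ ((m + 1 - k : ℕ) : ℝ) ^ k := pow_le_pow_left₀ hx₀ (hx.trans hcast) k
    _ ≤ k.factorial * m.choose k := by
      rw [← Nat.cast_pow, ← Nat.cast_mul, ← Nat.descFactorial_eq_factorial_mul_choose]
      exact_mod_cast Nat.pow_sub_le_descFactorial m k

lemma div_sqrt_pow_two_mul_add_one (c : ℝ) {x : ℝ} (hx : 0 ≤ x) (k : ℕ) :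
    (c / √x) ^ (2 * k + 1) = (c ^ 2 / x) ^ k * (c / √x) := by
  rw [pow_succ, pow_mul, div_pow, Real.sq_sqrt hx]

lemma pow_mul_div_rpow_le_mul_choose_mul_pow {γ c C ρ : ℝ} {N n k : ℕ} (hγ : 0 ≤ γ)
    (hc : 0 ≤ c) (hρ : 0 ≤ ρ) (hkn : (k : ℝ) + 2 ≤ (1 - ρ) * n)
    (hN : (k.factorial : ℝ) * γ ^ k / (k : ℝ) ^ C ≤ N) :
    (γ * c ^ 2 * ρ) ^ k * (c / √n) / (k : ℝ) ^ C ≤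
      N * (n - 3).choose k * (c / √n) ^ (2 * k + 1) := by
  have hρn : 0 ≤ ρ * n := by positivity
  have hn : (0 : ℝ) < n := by linarith [(Nat.cast_nonneg k : (0 : ℝ) ≤ k)]
  have hn3 : (n : ℝ) - 3 ≤ ((n - 3 : ℕ) : ℝ) := by exact_mod_cast sub_le_natCast_tsub n 3
  have hchoose : (ρ * n) ^ k ≤ k.factorial * (n - 3).choose k :=
    pow_le_factorial_mul_choose hρn (by linarith)
  have hsplit : γ * c ^ 2 * ρ = γ * (ρ * n) * (c ^ 2 / n) := by field_simp
  calc (γ * c ^ 2 * ρ) ^ k * (c / √n) / (k : ℝ) ^ C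
      = γ ^ k / (k : ℝ) ^ C * (ρ * n) ^ k * (c ^ 2 / n) ^ k * (c / √n) := by
        rw [hsplit, mul_pow, mul_pow]; ring
    _ ≤ γ ^ k / (k : ℝ) ^ C * (k.factorial * (n - 3).choose k) * (c ^ 2 / n) ^ k * (c / √n) := by
        gcongr
    _ = k.factorial * γ ^ k / (k : ℝ) ^ C * (n - 3).choose k * (c / √n) ^ (2 * k + 1) := by
        rw [div_sqrt_pow_two_mul_add_one c hn.le]; ring
    _ ≤ N * (n - 3).choose k * (c / √n) ^ (2 * k + 1) := by gcongr

lemma eventually_mul_add_le_mul_sq {a : ℝ} (ha : 0 < a) (β δ : ℝ) :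
    ∀ᶠ x : ℝ in atTop, β * x + δ ≤ a * x ^ 2 := by
  filter_upwards [eventually_ge_atTop (max 1 ((|β| + |δ|) / a))] with x hx
  have hx1 : 1 ≤ x := le_of_max_le_left hx
  have hax : |β| + |δ| ≤ a * x := by
    rw [← div_le_iff₀' ha]; exact le_of_max_le_right hx
  nlinarith [le_abs_self β, le_abs_self δ, abs_nonneg β, abs_nonneg δ]

lemma tendsto_log_natCast_atTop : Tendsto (fun n : ℕ => Real.log n) atTop atTop :=
  Real.tendsto_log_atTop.comp tendsto_natCast_atTop_atTop

lemma tendsto_ceil_log_sq_atTop : Tendsto (fun n : ℕ => ⌈Real.log n ^ 2⌉₊) atTop atTop :=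
  tendsto_nat_ceil_atTop.comp <| (tendsto_pow_atTop two_ne_zero).comp tendsto_log_natCast_atTop

lemma eventually_ceil_log_sq_add_two_le {δ : ℝ} (hδ : 0 < δ) :
    ∀ᶠ n : ℕ in atTop, (⌈Real.log n ^ 2⌉₊ : ℝ) + 2 ≤ δ * n := by
  have ho : (fun x : ℝ => Real.log x ^ 2 + 3) =o[atTop] id :=
    Real.isLittleO_pow_log_id_atTop.add (isLittleO_const_id_atTop 3)
  filter_upwards [tendsto_natCast_atTop_atTop.eventually (ho.bound hδ)] with n hn
  have hceil : (⌈Real.log n ^ 2⌉₊ : ℝ) < Real.log n ^ 2 + 1 := Nat.ceil_lt_add_one (by positivity)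
  rw [Real.norm_of_nonneg (by positivity), id, Real.norm_of_nonneg (Nat.cast_nonneg n)] at hn
  linarith

lemma eventually_rpow_log_le_pow_ceil_log_sq {b c C : ℝ} (hb : 1 < b) (hc : 0 < c) (hC : 0 ≤ C) :
    ∀ᶠ n : ℕ in atTop, (n : ℝ) ^ (Real.log b / 2 * Real.log n) ≤
      b ^ ⌈Real.log n ^ 2⌉₊ * (c / √n) / (⌈Real.log n ^ 2⌉₊ : ℝ) ^ C := by
  have hlogb : 0 < Real.log b := Real.log_pos hb
  filter_upwards [tendsto_log_natCast_atTop.eventually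
      (eventually_mul_add_le_mul_sq (half_pos hlogb) (C + 1 / 2) (-Real.log c)),
    eventually_ceil_log_sq_add_two_le one_pos,
    tendsto_ceil_log_sq_atTop.eventually_ge_atTop 1] with n hquad hkn hk1
  set L := Real.log n
  set k := ⌈L ^ 2⌉₊
  have hk : (0 : ℝ) < k := by exact_mod_cast hk1
  have hn : (0 : ℝ) < n := by linarith
  have hLk : L ^ 2 ≤ k := Nat.le_ceil _
  have hlogk : Real.log k ≤ L := Real.log_le_log hk (by linarith)
  rw [← Real.log_le_log_iff (by positivity) (by positivity), Real.log_rpow hn, Real.log_div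
    (by positivity) (by positivity), Real.log_mul (by positivity) (by positivity), Real.log_pow,
    Real.log_div hc.ne' (by positivity), Real.log_sqrt hn.le, Real.log_rpow hk]
  nlinarith [mul_le_mul_of_nonneg_right hLk hlogb.le, mul_le_mul_of_nonneg_left hlogk hC]

/-- Let `c > 1/√γ` (`γ = 256/27`) and `k = ⌈log² n⌉`. The expected number `μ n` of
`(k/2)`-simple, properly `n`-labeled triangulations of `[123]` with `k` internal vertices
present in `Y₂(n, c/√n)` equals `N_simple(k) · C(n-3, k) · (c/√n)^(2k+1)`; given the lower
bound `N_simple(k) ≥ k! γ^k / k^C` on the number of `(k/2)`-simple triangulations, one has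
`μ ≥ n^{Ω(log n)}`, i.e. `μ` tends to infinity superpolynomially. -/
theorem mu_superpolynomial (c : ℝ) (hc : 1 / Real.sqrt ((256 : ℝ) / 27) < c)
    (Nsimple : ℕ → ℕ)
    (hNs : ∃ C : ℝ, 0 < C ∧ ∀ k : ℕ, 2 ≤ k →
      (Nat.factorial k : ℝ) * ((256 : ℝ) / 27) ^ k / (k : ℝ) ^ C ≤ (Nsimple k : ℝ))
    (μ : ℕ → ℝ)
    (hμ : ∀ n : ℕ, μ n =
      (Nsimple ⌈(Real.log n) ^ 2⌉₊ : ℝ) * (Nat.choose (n - 3) ⌈(Real.log n) ^ 2⌉₊ : ℝ) *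
        (c / Real.sqrt n) ^ (2 * ⌈(Real.log n) ^ 2⌉₊ + 1)) :
    ∃ ε : ℝ, 0 < ε ∧ ∃ N : ℕ, ∀ n : ℕ, N ≤ n →
      (n : ℝ) ^ (ε * Real.log n) ≤ μ n := by
  obtain ⟨C, hC, hNs⟩ := hNs
  have hsγ : 0 < √((256 : ℝ) / 27) := by positivity
  have hc0 : 0 < c := (by positivity : (0 : ℝ) < 1 / √(256 / 27)).trans hc
  set b := √((256 : ℝ) / 27) * c
  have hb : 1 < b := (div_lt_iff₀' hsγ).mp hc
  have hρ : b⁻¹ < 1 := inv_lt_one_of_one_lt₀ hb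
  have hγc : 256 / 27 * c ^ 2 * b⁻¹ = b := by
    rw [← Real.sq_sqrt (by norm_num : (0 : ℝ) ≤ 256 / 27)]
    field_simp
    ring
  refine ⟨Real.log b / 2, half_pos (Real.log_pos hb), ?_⟩
  rw [← eventually_atTop]
  filter_upwards [eventually_rpow_log_le_pow_ceil_log_sq hb hc0 hC.le,
    eventually_ceil_log_sq_add_two_le (sub_pos.mpr hρ),
    tendsto_ceil_log_sq_atTop.eventually_ge_atTop 2] with n hrpow hkn hk2
  calc (n : ℝ) ^ (Real.log b / 2 * Real.log n)
      ≤ (256 / 27 * c ^ 2 * b⁻¹) ^ ⌈Real.log n ^ 2⌉₊ * (c / √n) / (⌈Real.log n ^ 2⌉₊ : ℝ) ^ C := by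
        rwa [hγc]
    _ ≤ μ n := hμ n ▸ pow_mul_div_rpow_le_mul_choose_mul_pow (by norm_num) hc0.le
        (by positivity) hkn (hNs _ hk2)
end
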